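/- Every Satake diagram is a generalized Satake diagram: Sat(A) ⊆ GSat(A). Moreover, if (X,τ)∈CD(A)∖GSat(A), then there exists (i,j)∈(I∖X)×X with τ(i)=i, X̌(i)={j}, a_{ij}=a_{ji}=−1 and α_i(ρ_X^∨)=−1/2∉Z. -/

import Mathlib

open scoped BigOperators

namespace GSat

noncomputable section

variable {I : Type} [Fintype I] [DecidableEq I]

/-- A Cartan matrix of finite type; convention: `A i j = α_j (h_i)`.
Finite type is encoded by positive definiteness of a symmetrization. -/
structure IsCartanFin (A : Matrix I I ℤ) : Prop where
  diag : ∀ i, A i i = 2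
  offdiag_nonpos : ∀ i j, i ≠ j → A i j ≤ 0
  symm_zero : ∀ i j, A i j = 0 → A j i = 0
  finiteType : ∃ d : I → ℚ, (∀ i, 0 < d i) ∧ (∀ i j, d i * (A i j : ℚ) = d j * (A j i : ℚ)) ∧
    ∀ v : I → ℚ, v ≠ 0 → 0 < ∑ i, ∑ j, d i * (A i j : ℚ) * v i * v j

/-- A Cartan matrix is indecomposable. -/
def Indecomposable (A : Matrix I I ℤ) : Prop :=
  Nonempty I ∧ ∀ s : Set I, (∀ i ∈ s, ∀ j, j ∉ s → A i j = 0) → s = ∅ ∨ s = Set.univ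

/-- The pairing `α (h_i)` where `v` is the coordinate vector of `α` in the basis of
simple roots. -/
def pairA (A : Matrix I I ℤ) (i : I) (v : I → ℝ) : ℝ := ∑ j, (A i j : ℝ) * v j

/-- The coordinate vector of the simple root `α_i`. -/
def al (i : I) : I → ℝ := Pi.single i 1

/-- The simple reflection `s_i (α) = α - α(h_i) α_i` on `h* = ℝ^I` (coordinates w.r.t.
the simple roots), as a linear map. -/
def reflMap (A : Matrix I I ℤ) (i : I) : (I → ℝ) →ₗ[ℝ] (I → ℝ) where
  toFun v k := v k - (if k = i then pairA A i v else 0)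
  map_add' v w := by
    funext k
    by_cases hk : k = i <;>
      simp [pairA, hk, Finset.sum_add_distrib, mul_add] <;> ring
  map_smul' c v := by
    funext k
    have hs : ∑ j, (A i j : ℝ) * (c * v j) = c * ∑ j, (A i j : ℝ) * v j := by
      rw [Finset.mul_sum]; exact Finset.sum_congr rfl fun j _ => by ring
    by_cases hk : k = i <;> simp [pairA, hk, hs] <;> ring

theorem pairA_reflMap (A : Matrix I I ℤ) (h2 : ∀ i, A i i = 2) (i : I) (v : I → ℝ) :
    pairA A i (reflMap A i v) = - pairA A i v := by
  have : ∀ j, (A i j : ℝ) * (reflMap A i v j)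
      = (A i j : ℝ) * v j - (if j = i then (A i j : ℝ) * pairA A i v else 0) := by
    intro j
    by_cases hj : j = i <;> simp [reflMap, hj] <;> ring
  rw [pairA]
  calc ∑ j, (A i j : ℝ) * (reflMap A i v) j
      = ∑ j, ((A i j : ℝ) * v j - (if j = i then (A i j : ℝ) * pairA A i v else 0)) := by
        exact Finset.sum_congr rfl fun j _ => this j
    _ = pairA A i v - (A i i : ℝ) * pairA A i v := by
        rw [Finset.sum_sub_distrib, Finset.sum_ite_eq' Finset.univ i
          (fun j => (A i j : ℝ) * pairA A i v)]
        simp [pairA]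
    _ = - pairA A i v := by rw [h2 i]; push_cast; ring

theorem reflMap_invol (A : Matrix I I ℤ) (h2 : ∀ i, A i i = 2) (i : I) :
    Function.Involutive (reflMap A i) := by
  intro v
  funext k
  by_cases hk : k = i
  · show reflMap A i v k - _ = _
    rw [pairA_reflMap A h2 i v]
    simp [reflMap, hk]
  · show reflMap A i v k - _ = _
    simp [reflMap, hk]

/-- The simple reflection `s_i` as a linear automorphism. -/
noncomputable def srefl (A : Matrix I I ℤ) (h2 : ∀ i, A i i = 2) (i : I) :
    (I → ℝ) ≃ₗ[ℝ] (I → ℝ) :=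
  { reflMap A i with
    invFun := reflMap A i
    left_inv := reflMap_invol A h2 i
    right_inv := reflMap_invol A h2 i }

/-- The composite `s_{i_1} ∘ s_{i_2} ∘ ⋯ ∘ s_{i_l}` for a word `[i_1, …, i_l]`. -/
noncomputable def comboWord (A : Matrix I I ℤ) (h2 : ∀ i, A i i = 2) :
    List I → ((I → ℝ) ≃ₗ[ℝ] (I → ℝ))
  | [] => LinearEquiv.refl ℝ (I → ℝ)
  | i :: l => (comboWord A h2 l).trans (srefl A h2 i)

/-- The Weyl group `W` (generated by all simple reflections). -/
def Wgroup (A : Matrix I I ℤ) (h2 : ∀ i, A i i = 2) :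
    Subgroup ((I → ℝ) ≃ₗ[ℝ] (I → ℝ)) :=
  Subgroup.closure (Set.range (srefl A h2))

/-- The parabolic subgroup `W_X` generated by the simple reflections `s_i`, `i ∈ X`. -/
def WXgroup (A : Matrix I I ℤ) (h2 : ∀ i, A i i = 2) (X : Finset I) :
    Subgroup ((I → ℝ) ≃ₗ[ℝ] (I → ℝ)) :=
  Subgroup.closure ((fun i => srefl A h2 i) '' ↑X)

/-- A compatible decoration `(X, τ)` together with the longest element `w_X` of `W_X`:
`τ` is an involutive diagram automorphism with `τ(X) = X` and `τ|_X = τ_{0,X}`, the latter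
being encoded by `w_X (α_i) = -α_{τ(i)}` for `i ∈ X` (which also characterises `w_X`
uniquely as an element of `W_X`). -/
structure CDdata (A : Matrix I I ℤ) (h2 : ∀ i, A i i = 2) where
  X : Finset I
  τ : Equiv.Perm I
  wX : (I → ℝ) ≃ₗ[ℝ] (I → ℝ)
  τ_cartan : ∀ i j, A (τ i) (τ j) = A i j
  τ_invol : ∀ i, τ (τ i) = i
  τ_X : ∀ i, i ∈ X ↔ τ i ∈ X
  wX_mem : wX ∈ WXgroup A h2 X
  wX_simple : ∀ i ∈ X, wX (al i) = -(al (τ i))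

variable {A : Matrix I I ℤ} {h2 : ∀ i, A i i = 2}

/-- The involution `θ = -w_X ∘ τ` acting on `h*` (in simple root coordinates). -/
def thetaV (cd : CDdata A h2) (v : I → ℝ) : I → ℝ := -(cd.wX (fun j => v (cd.τ j)))

/-- `(X,τ)` is a generalized Satake diagram. -/
def IsGSat (cd : CDdata A h2) : Prop :=
  ¬ ∃ i j, i ∉ cd.X ∧ j ∈ cd.X ∧ cd.τ i = i ∧
      cd.wX (al i) = al i + al j ∧ A i j = -1

/-- Data describing the element `2 ρ_X^∨` (twice the dual Weyl vector of `g_X`),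
given by its coordinates in the basis of the `h_j`. -/
structure RhoData (cd : CDdata A h2) where
  tworho : I → ℤ
  supp : ∀ j, j ∉ cd.X → tworho j = 0
  pair_X : ∀ i ∈ cd.X, ∑ j, tworho j * A j i = 2

/-- `α_i (2ρ_X^∨)`. -/
def rhoPair (cd : CDdata A h2) (rd : RhoData cd) (i : I) : ℤ := ∑ j, rd.tworho j * A j i

/-- `ζ(α) = (-1)^(α(2 ρ_X^∨))` for `α` in the root lattice. -/
def zetaC (cd : CDdata A h2) (rd : RhoData cd) (c : I → ℤ) : ℂ :=
  (-1 : ℂ) ^ (∑ i, c i * rhoPair cd rd i)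

/-- `(X,τ)` is a Satake diagram. -/
def IsSat (cd : CDdata A h2) (rd : RhoData cd) : Prop :=
  ∀ i, i ∉ cd.X → cd.τ i = i → (2 : ℤ) ∣ rhoPair cd rd i

/-- The excluded rank-two diagram: one white node joined by a single edge to one black
node. -/
def IsExcluded (cd : CDdata A h2) : Prop :=
  ∃ i j, i ≠ j ∧ (Finset.univ : Finset I) = {i, j} ∧ cd.X = {j} ∧ A i j = -1 ∧ A j i = -1

/-- `(X,τ)` is a weak Satake diagram. -/
def IsWSat (cd : CDdata A h2) (rd : RhoData cd) : Prop :=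
  IsGSat cd ∧ ¬ IsSat cd rd ∧ ¬ IsExcluded cd

/-- `S = I^*` contains exactly one element of each `τ`-orbit in `I ∖ X`. -/
def IsOrbitReps (cd : CDdata A h2) (S : Finset I) : Prop :=
  (∀ i ∈ S, i ∉ cd.X) ∧ (∀ i, i ∉ cd.X → i ∈ S ∨ cd.τ i ∈ S) ∧
    (∀ i ∈ S, cd.τ i ∈ S → cd.τ i = i)

/-- `I_diff = { i ∈ I^* : τ(i) ≠ i and (θ(α_i))(h_i) ≠ 0 }`. -/
def Idiff (cd : CDdata A h2) (S : Finset I) : Set I :=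
  {i | i ∈ S ∧ cd.τ i ≠ i ∧ pairA A i (thetaV cd (al i)) ≠ 0}

/-- `I_ns = { i : (θ(α_i))(h_i) = -2 }`. -/
def Ins (cd : CDdata A h2) : Set I :=
  {i | pairA A i (thetaV cd (al i)) = -2}

/-- `I_nsf = { j ∈ I_ns : a_{ij} even for all i ∈ I_ns }`. -/
def Insf (cd : CDdata A h2) : Set I :=
  {j | j ∈ Ins cd ∧ ∀ i ∈ Ins cd, (2 : ℤ) ∣ A i j}

end

end GSat
namespace GSat

variable {I : Type} [Fintype I] [DecidableEq I]

/-- The neighbour relation within `X` on the Dynkin diagram of `A`. -/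
def neighIn (A : Matrix I I ℤ) (Xs : Set I) (a b : I) : Prop :=
  a ∈ Xs ∧ b ∈ Xs ∧ a ≠ b ∧ A a b ≠ 0

/-- `X̌(i)`: the union of the connected components of `X` neighbouring `{i, τ(i)}`. -/
def checkX {A : Matrix I I ℤ} {h2 : ∀ i, A i i = 2} (cd : CDdata A h2) (i : I) : Set I :=
  {j | j ∈ cd.X ∧ ∃ k ∈ cd.X, Relation.ReflTransGen (neighIn A ↑cd.X) j k ∧
    (A k i ≠ 0 ∨ A k (cd.τ i) ≠ 0)}

/-!
Positive weights `d` symmetrise `A`, so `(α_k, α_l) = d_k a_{kl}` defines a `W`-invariant form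
on `h*`. Suppose `w_X(α_i) = α_i + α_j` with `a_{ij} = -1`. Comparing `(α_i, α_i)` with its image
gives `d_i = d_j`, hence `a_{ji} = -1`; comparing `(α_i, α_k)` for `k ∈ X`, where
`w_X(α_k) = -α_{τ k}`, gives `d_i a_{ik} + d_i a_{i,τk} + d_j a_{j,τk} = 0`. Off-diagonal entries
are non-positive, so for `τ k ≠ j` every term vanishes; `k = j` then forces `τ j = j`, and `j`
is an isolated node of `X` joined to `i` only: `X̌(i) = {j}`, the coefficient of `h_j` in
`2ρ_X^∨` is `1`, and `α_i(2ρ_X^∨) = a_{ji} = -1` is odd, so `(X, τ)` is not Satake.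
-/

def symmForm (A : Matrix I I ℤ) (d : I → ℚ) : LinearMap.BilinForm ℝ (I → ℝ) :=
  Matrix.toLinearMap₂' ℝ (Matrix.of fun k l => (d k * A k l : ℝ))

section SymmForm

variable {A : Matrix I I ℤ} {d : I → ℚ}

lemma symmForm_apply (u v : I → ℝ) :
    symmForm A d u v = ∑ k, ∑ l, (d k * A k l : ℝ) * u k * v l := by
  rw [symmForm, Matrix.toLinearMap₂'_apply]
  simp only [Matrix.of_apply, smul_eq_mul]
  exact Finset.sum_congr rfl fun k _ => Finset.sum_congr rfl fun l _ => by ring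

lemma symmForm_al_al (a b : I) : symmForm A d (al a) (al b) = d a * A a b := by
  simp [symmForm_apply, al, Pi.single_apply]

lemma symmForm_al_left (m : I) (v : I → ℝ) : symmForm A d (al m) v = d m * pairA A m v := by
  simp [symmForm_apply, al, Pi.single_apply, pairA, Finset.mul_sum, mul_assoc]

lemma symmForm_comm (hsym : ∀ k l, d k * A k l = d l * A l k) (u v : I → ℝ) :
    symmForm A d u v = symmForm A d v u := by
  rw [symmForm_apply, symmForm_apply, Finset.sum_comm]
  refine Finset.sum_congr rfl fun k _ => Finset.sum_congr rfl fun l _ => ?_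
  have hlk : (d l * A l k : ℝ) = d k * A k l := by exact_mod_cast hsym l k
  rw [hlk]
  ring

lemma pairA_al (m k : I) : pairA A m (al k) = A m k := by
  simp [pairA, al, Pi.single_apply]

lemma srefl_eq_sub (h2 : ∀ i, A i i = 2) (m : I) (u : I → ℝ) :
    srefl A h2 m u = u - pairA A m u • al m := by
  funext k
  by_cases hk : k = m <;> simp [srefl, reflMap, al, hk]

lemma symmForm_srefl (h2 : ∀ i, A i i = 2) (hsym : ∀ k l, d k * A k l = d l * A l k)
    (m : I) (u v : I → ℝ) :
    symmForm A d (srefl A h2 m u) (srefl A h2 m v) = symmForm A d u v := by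
  simp only [srefl_eq_sub, map_sub, map_smul, LinearMap.sub_apply, LinearMap.smul_apply,
    symmForm_al_left, symmForm_comm hsym u (al m), pairA_al, h2, smul_eq_mul]
  push_cast
  ring

lemma symmForm_apply_of_mem_WXgroup (h2 : ∀ i, A i i = 2)
    (hsym : ∀ k l, d k * A k l = d l * A l k) {X : Finset I} {g : (I → ℝ) ≃ₗ[ℝ] (I → ℝ)}
    (hg : g ∈ WXgroup A h2 X) (u v : I → ℝ) :
    symmForm A d (g u) (g v) = symmForm A d u v := by
  induction hg using Subgroup.closure_induction generalizing u v with
  | mem g hg =>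
    obtain ⟨m, -, rfl⟩ := hg
    exact symmForm_srefl h2 hsym m u v
  | one => rfl
  | mul g g' _ _ hg hg' => exact (hg _ _).trans (hg' u v)
  | inv g _ hg => simpa using (hg (g⁻¹ u) (g⁻¹ v)).symm

end SymmForm

section NotGSat

variable {A : Matrix I I ℤ} {h2 : ∀ i, A i i = 2} {cd : CDdata A h2} {d : I → ℚ} {i j : I}

lemma weight_eq_of_wX_al (hsym : ∀ k l, d k * A k l = d l * A l k)
    (hw : cd.wX (al i) = al i + al j) (hAij : A i j = -1) : d j = d i := by
  have h := symmForm_apply_of_mem_WXgroup h2 hsym cd.wX_mem (al i) (al i)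
  rw [hw] at h
  simp only [map_add, LinearMap.add_apply, symmForm_al_al, h2, hAij] at h
  have hji : (d j * A j i : ℝ) = d i * A i j := by exact_mod_cast hsym j i
  rw [hAij] at hji
  push_cast at h hji
  exact_mod_cast (by linarith : (d j : ℝ) = d i)

lemma weight_mul_cartan_add_eq_zero (hsym : ∀ k l, d k * A k l = d l * A l k)
    (hw : cd.wX (al i) = al i + al j) {k : I} (hk : k ∈ cd.X) :
    d i * A i k + d i * A i (cd.τ k) + d j * A j (cd.τ k) = 0 := by
  have h := symmForm_apply_of_mem_WXgroup h2 hsym cd.wX_mem (al i) (al k)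
  rw [hw, cd.wX_simple k hk] at h
  simp only [map_add, map_neg, LinearMap.add_apply, symmForm_al_al] at h
  exact_mod_cast (by linarith : (d i * A i k + d i * A i (cd.τ k) + d j * A j (cd.τ k) : ℝ) = 0)

lemma cartan_eq_zero_of_wX_al (hA : IsCartanFin A) (hd : ∀ k, 0 < d k)
    (hsym : ∀ k l, d k * A k l = d l * A l k) (hw : cd.wX (al i) = al i + al j)
    (hiX : i ∉ cd.X) {k : I} (hk : k ∈ cd.X) (hτk : cd.τ k ≠ j) :
    A i k = 0 ∧ A j (cd.τ k) = 0 := by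
  have hτkX : cd.τ k ∈ cd.X := (cd.τ_X k).mp hk
  have nonpos {a b : I} (hab : a ≠ b) : d a * A a b ≤ 0 :=
    mul_nonpos_of_nonneg_of_nonpos (hd a).le (by exact_mod_cast hA.offdiag_nonpos a b hab)
  have h₁ := nonpos (ne_of_mem_of_not_mem hk hiX).symm
  have h₂ := nonpos (ne_of_mem_of_not_mem hτkX hiX).symm
  have h₃ := nonpos hτk.symm
  have hsum := weight_mul_cartan_add_eq_zero hsym hw hk
  constructor
  · exact_mod_cast (mul_eq_zero.mp (by linarith : d i * A i k = 0)).resolve_left (hd i).ne'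
  · exact_mod_cast
      (mul_eq_zero.mp (by linarith : d j * A j (cd.τ k) = 0)).resolve_left (hd j).ne'

lemma cartan_symm_eq_neg_one_of_wX_al (hd : ∀ k, 0 < d k)
    (hsym : ∀ k l, d k * A k l = d l * A l k) (hw : cd.wX (al i) = al i + al j)
    (hAij : A i j = -1) : A j i = -1 := by
  have h := hsym j i
  rw [weight_eq_of_wX_al hsym hw hAij, hAij] at h
  push_cast at h
  exact_mod_cast mul_left_cancel₀ (hd i).ne' h

lemma tau_eq_self_of_wX_al (hA : IsCartanFin A) (hd : ∀ k, 0 < d k)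
    (hsym : ∀ k l, d k * A k l = d l * A l k) (hw : cd.wX (al i) = al i + al j)
    (hAij : A i j = -1) (hiX : i ∉ cd.X) (hjX : j ∈ cd.X) : cd.τ j = j := by
  by_contra hτj
  have h := (cartan_eq_zero_of_wX_al hA hd hsym hw hiX hjX hτj).1
  omega

lemma cartan_eq_zero_of_ne_of_wX_al (hA : IsCartanFin A) (hd : ∀ k, 0 < d k)
    (hsym : ∀ k l, d k * A k l = d l * A l k) (hw : cd.wX (al i) = al i + al j)
    (hAij : A i j = -1) (hiX : i ∉ cd.X) (hjX : j ∈ cd.X) {k : I} (hk : k ∈ cd.X)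
    (hkj : k ≠ j) : A k i = 0 ∧ A k j = 0 := by
  have hτj := tau_eq_self_of_wX_al hA hd hsym hw hAij hiX hjX
  have hτ_ne {m : I} (hmj : m ≠ j) : cd.τ m ≠ j := fun h => hmj (by
    rw [← cd.τ_invol m, h, hτj])
  have hik := (cartan_eq_zero_of_wX_al hA hd hsym hw hiX hk (hτ_ne hkj)).1
  have hτkX : cd.τ k ∈ cd.X := (cd.τ_X k).mp hk
  have hjk := (cartan_eq_zero_of_wX_al hA hd hsym hw hiX hτkX (hτ_ne (hτ_ne hkj))).2
  rw [cd.τ_invol] at hjk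
  exact ⟨hA.symm_zero i k hik, hA.symm_zero j k hjk⟩

end NotGSat

lemma checkX_eq_singleton {A : Matrix I I ℤ} {h2 : ∀ i, A i i = 2} {cd : CDdata A h2}
    {i j : I} (hjX : j ∈ cd.X) (hτi : cd.τ i = i) (hji : A j i ≠ 0)
    (hiso : ∀ k ∈ cd.X, k ≠ j → A k i = 0 ∧ A k j = 0) : checkX cd i = {j} := by
  ext m
  constructor
  · rintro ⟨-, k, hkX, hmk, hki⟩
    rw [hτi, or_self] at hki
    obtain rfl : k = j := by_contra fun hkj => hki (hiso k hkX hkj).1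
    rcases Relation.ReflTransGen.cases_tail hmk with rfl | ⟨c, -, hcX, -, hck, hAck⟩
    · rfl
    · exact absurd (hiso c hcX hck).2 hAck
  · rintro rfl
    exact ⟨hjX, m, hjX, .refl, .inl hji⟩

namespace RhoData

variable {A : Matrix I I ℤ} {h2 : ∀ i, A i i = 2} {cd : CDdata A h2} (rd : RhoData cd)

lemma sum_eq_of_isolated {j l : I} (h : ∀ k ∈ cd.X, k ≠ j → A k l = 0) :
    ∑ k, rd.tworho k * A k l = rd.tworho j * A j l := by
  refine Finset.sum_eq_single j (fun k _ hkj => ?_) (by simp)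
  by_cases hk : k ∈ cd.X
  · rw [h k hk hkj, mul_zero]
  · rw [rd.supp k hk, zero_mul]

lemma tworho_eq_one_of_isolated {j : I} (hjX : j ∈ cd.X)
    (h : ∀ k ∈ cd.X, k ≠ j → A k j = 0) : rd.tworho j = 1 := by
  have hj := rd.pair_X j hjX
  rw [rd.sum_eq_of_isolated h, h2 j] at hj
  omega

end RhoData

lemma rhoPair_eq_of_isolated {A : Matrix I I ℤ} {h2 : ∀ i, A i i = 2} {cd : CDdata A h2}
    (rd : RhoData cd) {i j : I} (hjX : j ∈ cd.X)
    (hiso : ∀ k ∈ cd.X, k ≠ j → A k i = 0 ∧ A k j = 0) : rhoPair cd rd i = A j i := by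
  rw [rhoPair, rd.sum_eq_of_isolated fun k hk hkj => (hiso k hk hkj).1,
    rd.tworho_eq_one_of_isolated hjX fun k hk hkj => (hiso k hk hkj).2, one_mul]

theorem exists_of_not_isGSat {A : Matrix I I ℤ} (hA : IsCartanFin A) {h2 : ∀ i, A i i = 2}
    {cd : CDdata A h2} (rd : RhoData cd) (hng : ¬ IsGSat cd) :
    ∃ i j, i ∉ cd.X ∧ j ∈ cd.X ∧ cd.τ i = i ∧
      checkX cd i = {j} ∧ A i j = -1 ∧ A j i = -1 ∧ rhoPair cd rd i = -1 := by
  obtain ⟨i, j, hiX, hjX, hτi, hw, hAij⟩ := not_not.mp hng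
  obtain ⟨d, hd, hsym, -⟩ := hA.finiteType
  have hAji := cartan_symm_eq_neg_one_of_wX_al hd hsym hw hAij
  have hiso : ∀ k ∈ cd.X, k ≠ j → A k i = 0 ∧ A k j = 0 := fun k hk hkj =>
    cartan_eq_zero_of_ne_of_wX_al hA hd hsym hw hAij hiX hjX hk hkj
  refine ⟨i, j, hiX, hjX, hτi, checkX_eq_singleton hjX hτi (by omega) hiso, hAij, hAji, ?_⟩
  rw [rhoPair_eq_of_isolated rd hjX hiso, hAji]

/-- Every Satake diagram is a generalized Satake diagram:
`Sat(A) ⊆ GSat(A)`.  Moreover, if `(X,τ) ∈ CD(A) ∖ GSat(A)`, then there exists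
`(i,j) ∈ (I∖X)×X` with `τ(i)=i`, `X̌(i)={j}`, `a_{ij}=a_{ji}=−1` and
`α_i(ρ_X^∨) = −1/2 ∉ ℤ` (i.e. `α_i(2ρ_X^∨) = −1`). -/
theorem stmt13 (A : Matrix I I ℤ) (hA : IsCartanFin A) (h2 : ∀ i, A i i = 2)
    (cd : CDdata A h2) (rd : RhoData cd) :
    (IsSat cd rd → IsGSat cd) ∧
      (¬ IsGSat cd → ∃ i j, i ∉ cd.X ∧ j ∈ cd.X ∧ cd.τ i = i ∧
        checkX cd i = {j} ∧ A i j = -1 ∧ A j i = -1 ∧ rhoPair cd rd i = -1) := by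
  refine ⟨fun hsat => ?_, exists_of_not_isGSat hA rd⟩
  by_contra hng
  obtain ⟨i, -, hiX, -, hτi, -, -, -, hrho⟩ := exists_of_not_isGSat hA rd hng
  have h := hsat i hiX hτi
  rw [hrho] at h
  omega

end GSat
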